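/- arXiv:1705.04302 — 2 statements merged into one kernel-verified Lean document; each statement's English description precedes it below -/
import Mathlib

section
/- If f : Fin (N+1) → ℕ is singly-peaked with peak at k (i.e., f is monotone nondecreasing on [0,k] and monotone nonincreasing on [k,N]), then the function g(i) = ⌈f(i)/3⌉ + ⌈f(i-1)/3⌉ (with f(-1) = 0) is singly-peaked with peak at k or at k+1. -/
/-- `f` is singly-peaked with peak at `k` : nondecreasing on `[0,k]`,
nonincreasing on `[k,N]`. -/
def SinglyPeakedAt {N : ℕ} (f : Fin (N + 1) → ℕ) (k : Fin (N + 1)) : Prop :=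
  (∀ i j : Fin (N + 1), i ≤ j → j ≤ k → f i ≤ f j) ∧
  (∀ i j : Fin (N + 1), k ≤ i → i ≤ j → f j ≤ f i)

/-- Column counts of the next layer of a Wallace tree: `⌈f i / 3⌉ + ⌈f (i-1) / 3⌉`,
with `f (-1)` interpreted as `0`. -/
def wallaceNext (N : ℕ) (f : Fin (N + 1) → ℕ) (i : Fin (N + 1)) : ℕ :=
  (f i + 2) / 3 +
    (if h : (i : ℕ) = 0 then 0
     else (f ⟨(i : ℕ) - 1, Nat.lt_of_le_of_lt (Nat.sub_le _ _) i.isLt⟩ + 2) / 3)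

theorem wallace_singly_peaked_step (N : ℕ) (f : Fin (N + 1) → ℕ) (k : Fin (N + 1))
    (hf : SinglyPeakedAt f k) :
    ∃ k' : Fin (N + 1), ((k' : ℕ) = (k : ℕ) ∨ (k' : ℕ) = (k : ℕ) + 1) ∧
      SinglyPeakedAt (wallaceNext N f) k' := by
  obtain ⟨hup, hdn⟩ := hf
  have hc : ∀ a b : ℕ, a ≤ b → (a + 2) / 3 ≤ (b + 2) / 3 := fun a b h =>
    Nat.div_le_div_right (by omega)
  set g := wallaceNext N f with hg
  -- Claim A: g nondecreasing on [0, k]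
  have A : ∀ i j : Fin (N + 1), i ≤ j → j ≤ k → g i ≤ g j := by
    intro i j hij hjk
    have hij' : (i : ℕ) ≤ j := hij
    have hjk' : (j : ℕ) ≤ k := hjk
    have h1 : (f i + 2) / 3 ≤ (f j + 2) / 3 := hc _ _ (hup i j hij hjk)
    show wallaceNext N f i ≤ wallaceNext N f j
    unfold wallaceNext
    by_cases hi : (i : ℕ) = 0
    · rw [dif_pos hi]
      exact le_trans (by omega) (Nat.le_add_right _ _)
    · have hj : (j : ℕ) ≠ 0 := by omega
      rw [dif_neg hi, dif_neg hj]
      refine Nat.add_le_add h1 (hc _ _ (hup _ _ ?_ ?_))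
      · show (i : ℕ) - 1 ≤ (j : ℕ) - 1; omega
      · show (j : ℕ) - 1 ≤ (k : ℕ); omega
  -- Claim B: g nonincreasing on [k+1, N]
  have B : ∀ i j : Fin (N + 1), (k : ℕ) + 1 ≤ (i : ℕ) → i ≤ j → g j ≤ g i := by
    intro i j hki hij
    have hij' : (i : ℕ) ≤ j := hij
    have hki2 : k ≤ i := by show (k : ℕ) ≤ i; omega
    have h1 : (f j + 2) / 3 ≤ (f i + 2) / 3 := hc _ _ (hdn i j hki2 hij)
    show wallaceNext N f j ≤ wallaceNext N f i
    unfold wallaceNext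
    have hi : (i : ℕ) ≠ 0 := by omega
    have hj : (j : ℕ) ≠ 0 := by omega
    rw [dif_neg hi, dif_neg hj]
    refine Nat.add_le_add h1 (hc _ _ (hdn _ _ ?_ ?_))
    · show (k : ℕ) ≤ (i : ℕ) - 1; omega
    · show (i : ℕ) - 1 ≤ (j : ℕ) - 1; omega
  by_cases hkN : (k : ℕ) = N
  · refine ⟨k, Or.inl rfl, A, ?_⟩
    intro i j hki hij
    have h1 : (k : ℕ) ≤ i := hki
    have h2 : (i : ℕ) ≤ j := hij
    have hiN : (i : ℕ) = N := by omega
    have hjN : (j : ℕ) = N := by omega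
    have : i = j := Fin.ext (by omega)
    rw [this]
  · have hk1 : (k : ℕ) + 1 < N + 1 := by have := k.isLt; omega
    set k1 : Fin (N + 1) := ⟨(k : ℕ) + 1, hk1⟩ with hk1def
    by_cases hcmp : g k1 ≤ g k
    · refine ⟨k, Or.inl rfl, A, ?_⟩
      intro i j hki hij
      have h1 : (k : ℕ) ≤ i := hki
      have h2 : (i : ℕ) ≤ j := hij
      by_cases hik : (i : ℕ) = k
      · by_cases hjk : (j : ℕ) = k
        · have : i = j := Fin.ext (by omega)
          rw [this]
        · have hik' : i = k := Fin.ext hik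
          calc g j ≤ g k1 := B k1 j (by simp [hk1def]) (by show (k1 : ℕ) ≤ j; simp [hk1def]; omega)
            _ ≤ g k := hcmp
            _ = g i := by rw [hik']
      · exact B i j (by omega) hij
    · push_neg at hcmp
      refine ⟨k1, Or.inr rfl, ?_, ?_⟩
      · intro i j hij hjk1
        have h1 : (i : ℕ) ≤ j := hij
        have h2 : (j : ℕ) ≤ k1 := hjk1
        by_cases hjk : (j : ℕ) ≤ k
        · exact A i j hij (by show (j : ℕ) ≤ k; omega)
        · have hjk1' : j = k1 := Fin.ext (by simp [hk1def] at h2 ⊢; omega)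
          by_cases hik : (i : ℕ) ≤ k
          · calc g i ≤ g k := A i k (by show (i:ℕ) ≤ k; omega) le_rfl
              _ ≤ g k1 := le_of_lt hcmp
              _ = g j := by rw [hjk1']
          · have : i = k1 := Fin.ext (by simp [hk1def] at h2 ⊢; omega)
            rw [this, hjk1']
      · intro i j hk1i hij
        exact B i j (by have : (k1 : ℕ) ≤ i := hk1i; simp [hk1def] at this; omega) hij
end

section
/- Suppose B is a read-once branching program of size s on Boolean variables that solves the conflict clause search problem for an unsatisfiable CNF formula φ (every full assignment is routed to a leaf labeled by a clause of φ falsified by that assignment). Then there exists a regular resolution refutation of φ of size at most s. -/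
/-- A clause: a finite set of literals, a literal being a variable (in ℕ) with a polarity. -/
abbrev Clause := Finset (ℕ × Bool)

/-- A CNF formula: a finite set of clauses. -/
abbrev CNF := Finset Clause

/-- An assignment falsifies a clause if it makes every literal in it false. -/
def Falsifies (σ : ℕ → Bool) (C : Clause) : Prop := ∀ l ∈ C, σ l.1 ≠ l.2

/-- A CNF formula is unsatisfiable if every assignment falsifies some clause. -/
def Unsat (φ : CNF) : Prop := ∀ σ : ℕ → Bool, ∃ C ∈ φ, Falsifies σ C

/-- A branching program of size `s`: a DAG (nodes topologically indexed by `Fin s`)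
with a unique source; each internal node queries a variable and has a 0- and a 1-edge;
each leaf is labeled by a clause. -/
structure BranchingProgram (s : ℕ) where
  source : Fin s
  isLeaf : Fin s → Bool
  leafClause : Fin s → Clause
  var : Fin s → ℕ
  next : Fin s → Bool → Fin s
  acyclic : ∀ v b, isLeaf v = false → v < next v b

namespace BranchingProgram

variable {s : ℕ} (B : BranchingProgram s)

/-- One step of computation on assignment `σ` (leaves are fixed points). -/
def step (σ : ℕ → Bool) (v : Fin s) : Fin s :=
  if B.isLeaf v then v else B.next v (σ (B.var v))

/-- The leaf reached by following `σ` from the source. -/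
def run (σ : ℕ → Bool) : Fin s := (B.step σ)^[s] B.source

/-- `l` is a path in the DAG starting at the source. -/
def IsSourcePath (l : List (Fin s)) : Prop :=
  l.head? = some B.source ∧
    List.Chain' (fun u v => B.isLeaf u = false ∧ ∃ b, v = B.next u b) l

/-- Read-once: no variable is queried twice along any source-to-leaf path. -/
def ReadOnce : Prop :=
  ∀ l : List (Fin s), B.IsSourcePath l →
    ((l.filter (fun v => !B.isLeaf v)).map B.var).Nodup

/-- An OBDD: the variables queried along every path are consistent with a
single total order of the variables. -/
def IsOBDD : Prop :=
  ∃ ord : ℕ → ℕ, Function.Injective ord ∧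
    ∀ l : List (Fin s), B.IsSourcePath l →
      ((l.filter (fun v => !B.isLeaf v)).map (fun v => ord (B.var v))).Pairwise (· < ·)

/-- `B` solves the conflict clause search problem for `φ`: every assignment is routed
to a leaf labeled by a clause of `φ` that it falsifies. -/
def SolvesSearch (φ : CNF) : Prop :=
  ∀ σ : ℕ → Bool,
    B.isLeaf (B.run σ) = true ∧ B.leafClause (B.run σ) ∈ φ ∧
      Falsifies σ (B.leafClause (B.run σ))

end BranchingProgram

/-- A resolution refutation of `φ`, as a DAG of clauses (topologically indexed):
each line is an axiom (clause of `φ`) or is obtained by resolving two earlier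
lines on a variable, and some line is the empty clause. -/
structure ResRefutation (φ : CNF) where
  size : ℕ
  clause : Fin size → Clause
  isAx : Fin size → Bool
  prem1 : Fin size → Fin size
  prem2 : Fin size → Fin size
  resVar : Fin size → ℕ
  ax_mem : ∀ i, isAx i = true → clause i ∈ φ
  prem1_lt : ∀ i, isAx i = false → prem1 i < i
  prem2_lt : ∀ i, isAx i = false → prem2 i < i
  res_pos : ∀ i, isAx i = false → (resVar i, true) ∈ clause (prem1 i)
  res_neg : ∀ i, isAx i = false → (resVar i, false) ∈ clause (prem2 i)
  res_eq : ∀ i, isAx i = false →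
    clause i =
      (clause (prem1 i)).erase (resVar i, true) ∪ (clause (prem2 i)).erase (resVar i, false)
  refutes : ∃ i, clause i = ∅

namespace ResRefutation

variable {φ : CNF} (R : ResRefutation φ)

/-- `l` is a path in the proof DAG (from a clause towards the axioms used to derive it). -/
def IsPath (l : List (Fin R.size)) : Prop :=
  List.Chain' (fun u v => R.isAx u = false ∧ (v = R.prem1 u ∨ v = R.prem2 u)) l

/-- Regular: no variable is resolved on more than once along any path of the proof DAG. -/
def Regular : Prop :=
  ∀ l : List (Fin R.size), R.IsPath l →
    ((l.filter (fun v => !R.isAx v)).map R.resVar).Nodup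

/-- Ordered: the resolved variables along every path of the proof DAG are consistent
with a single total order of the variables. -/
def Ordered : Prop :=
  ∃ ord : ℕ → ℕ, Function.Injective ord ∧
    ∀ l : List (Fin R.size), R.IsPath l →
      ((l.filter (fun v => !R.isAx v)).map (fun v => ord (R.resVar v))).Pairwise (· < ·)

end ResRefutation

/-!
Label every node `v` of the branching program, from the leaves upwards, by a clause `D v`
falsified by every assignment whose computation passes through `v`. A leaf keeps its clause.
At a node querying `x` with children labelled `D₀` and `D₁`, resolve `D₀` and `D₁` on `x`
if both contain the literal of `x` falsified on the corresponding edge; otherwise copy a child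
clause lacking that literal. The invariant survives because the program is
read-once: flipping `x` does not change the computation up to `v`, so an assignment reaching `v`
also reaches it with the other value of `x`. Every assignment reaches the source, hence
`D source = ∅`. Taken in reverse order, the nodes give a refutation with one line each, and every
path in it follows a path of the program, along which no variable is queried twice.
-/

namespace List

theorem exists_isChain_cons_sublist_of_isChain_transGen {α : Type*} {r : α → α → Prop}
    {a b : α} {l : List α} (hab : Relation.ReflTransGen r a b)
    (hl : IsChain (Relation.TransGen r) (b :: l)) :
    ∃ m, IsChain r (a :: m) ∧ b :: l <+ a :: m := by
  induction l generalizing a b with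
  | nil =>
    obtain ⟨m, hm, hlast⟩ := exists_isChain_cons_of_relationReflTransGen hab
    exact ⟨m, hm, singleton_sublist.2 (hlast ▸ getLast_mem _)⟩
  | cons c l ih =>
    obtain ⟨d, hbd, hdc⟩ := Relation.TransGen.head'_iff.1 hl.rel
    obtain ⟨m', hm', hsub'⟩ := ih hdc hl.tail
    obtain ⟨m, hm, hlast⟩ := exists_isChain_cons_of_relationReflTransGen hab
    have hb : [b] <+ a :: m := singleton_sublist.2 (hlast ▸ getLast_mem _)
    refine ⟨m ++ d :: m', ?_, hb.append hsub'⟩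
    rw [← cons_append]
    exact hm.append hm' (by simp [getLast?_eq_some_getLast, hlast, hbd])

end List

theorem Falsifies.mono {σ : ℕ → Bool} {C D : Clause} (h : Falsifies σ D) (hCD : C ⊆ D) :
    Falsifies σ C :=
  fun l hl => h l (hCD hl)

theorem falsifies_union {σ : ℕ → Bool} {C D : Clause} :
    Falsifies σ (C ∪ D) ↔ Falsifies σ C ∧ Falsifies σ D := by
  simp only [Falsifies, Finset.mem_union, or_imp, forall_and]

theorem Falsifies.erase_of_update {σ : ℕ → Bool} {x : ℕ} {b : Bool} {C : Clause}
    (h : Falsifies (Function.update σ x b) C) : Falsifies σ (C.erase (x, !b)) := by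
  rintro ⟨y, c⟩ hl
  obtain ⟨hne, hl⟩ := Finset.mem_erase.1 hl
  have := h _ hl
  by_cases hy : y = x
  · subst hy
    cases b <;> cases c <;> simp_all
  · rwa [Function.update_of_ne hy] at this

theorem eq_empty_of_forall_falsifies {C : Clause} (h : ∀ σ, Falsifies σ C) : C = ∅ :=
  Finset.eq_empty_of_forall_notMem fun l hl => h (fun _ => l.2) l hl rfl

namespace BranchingProgram

variable {s : ℕ} (B : BranchingProgram s)

def Edge (u w : Fin s) : Prop := B.isLeaf u = false ∧ ∃ b, w = B.next u b

def Reachable (v : Fin s) : Prop := Relation.ReflTransGen B.Edge B.source v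

variable {B}

theorem Edge.lt {u w : Fin s} (h : B.Edge u w) : u < w := by
  obtain ⟨hu, b, rfl⟩ := h
  exact B.acyclic u b hu

theorem le_of_reflTransGen_edge {u w : Fin s} (h : Relation.ReflTransGen B.Edge u w) : u ≤ w := by
  induction h with
  | refl => exact le_rfl
  | tail _ h ih => exact ih.trans h.lt.le

theorem induction_on_children {motive : Fin s → Prop}
    (leaf : ∀ v, B.isLeaf v = true → motive v)
    (internal : ∀ v, B.isLeaf v = false → (∀ b, motive (B.next v b)) → motive v)
    (v : Fin s) : motive v := by
  cases hv : B.isLeaf v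
  · exact internal v hv fun b => induction_on_children leaf internal (B.next v b)
  · exact leaf v hv
termination_by s - v
decreasing_by have := B.acyclic v b hv; omega

variable (B)

/-- `B.label L v = (p, D)`: the clause `D` of node `v` when the leaves are labelled by `L`, and
the node `p` whose line `v` copies: a leaf, or a node where `D` is obtained by resolution. -/
def label (L : Fin s → Clause) (v : Fin s) : Fin s × Clause :=
  if B.isLeaf v then (v, L v)
  else
    let p₀ := label L (B.next v false)
    let p₁ := label L (B.next v true)
    if (B.var v, true) ∈ p₀.2 then
      if (B.var v, false) ∈ p₁.2 then
        (v, p₀.2.erase (B.var v, true) ∪ p₁.2.erase (B.var v, false))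
      else p₁
    else p₀
termination_by s - v
decreasing_by
  all_goals exact Nat.sub_lt_sub_left v.isLt (B.acyclic v _ (by simpa using ‹¬B.isLeaf v›))

abbrev pivot (L : Fin s → Clause) (v : Fin s) : Fin s := (B.label L v).1

abbrev nodeClause (L : Fin s → Clause) (v : Fin s) : Clause := (B.label L v).2

variable {B} {L : Fin s → Clause}

theorem label_of_isLeaf {v : Fin s} (hv : B.isLeaf v = true) : B.label L v = (v, L v) := by
  rw [label, if_pos hv]

theorem label_of_isLeaf_eq_false {v : Fin s} (hv : B.isLeaf v = false) :
    B.label L v =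
      if (B.var v, true) ∈ B.nodeClause L (B.next v false) then
        if (B.var v, false) ∈ B.nodeClause L (B.next v true) then
          (v, (B.nodeClause L (B.next v false)).erase (B.var v, true) ∪
            (B.nodeClause L (B.next v true)).erase (B.var v, false))
        else B.label L (B.next v true)
      else B.label L (B.next v false) := by
  rw [label, if_neg (by simp [hv])]

theorem label_copy_or_resolve {v : Fin s} (hv : B.isLeaf v = false) :
    (∃ b, B.label L v = B.label L (B.next v b)) ∨
      (B.var v, true) ∈ B.nodeClause L (B.next v false) ∧
      (B.var v, false) ∈ B.nodeClause L (B.next v true) ∧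
      B.label L v = (v, (B.nodeClause L (B.next v false)).erase (B.var v, true) ∪
        (B.nodeClause L (B.next v true)).erase (B.var v, false)) := by
  rw [label_of_isLeaf_eq_false hv]
  split_ifs with h₀ h₁
  · exact .inr ⟨h₀, h₁, rfl⟩
  · exact .inl ⟨true, rfl⟩
  · exact .inl ⟨false, rfl⟩

theorem reflTransGen_pivot (v : Fin s) : Relation.ReflTransGen B.Edge v (B.pivot L v) := by
  induction v using B.induction_on_children with
  | leaf v hv => rw [pivot, label_of_isLeaf hv]
  | internal v hv ih =>
    rcases label_copy_or_resolve (L := L) hv with ⟨b, hb⟩ | ⟨-, -, hres⟩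
    · rw [pivot, hb]
      exact .head ⟨hv, b, rfl⟩ (ih b)
    · rw [pivot, hres]

theorem nodeClause_subset_resolvent {v : Fin s} (hv : B.isLeaf v = false) :
    B.nodeClause L v ⊆ (B.nodeClause L (B.next v false)).erase (B.var v, true) ∪
      (B.nodeClause L (B.next v true)).erase (B.var v, false) := by
  rw [nodeClause, label_of_isLeaf_eq_false hv]
  split_ifs with h₀ h₁
  · exact subset_rfl
  · rw [Finset.erase_eq_of_notMem h₁]
    exact Finset.subset_union_right
  · rw [Finset.erase_eq_of_notMem h₀]
    exact Finset.subset_union_left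

theorem nodeClause_eq_of_isLeaf_pivot {v : Fin s} (h : B.isLeaf (B.pivot L v) = true) :
    B.nodeClause L v = L (B.pivot L v) := by
  induction v using B.induction_on_children with
  | leaf v hv => rw [nodeClause, pivot, label_of_isLeaf hv]
  | internal v hv ih =>
    rcases label_copy_or_resolve (L := L) hv with ⟨b, hb⟩ | ⟨-, -, hres⟩
    · simp only [pivot, nodeClause, hb] at h ⊢
      exact ih b h
    · simp only [pivot, hres] at h
      simp_all

theorem resolvent_at_pivot {v : Fin s} (h : B.isLeaf (B.pivot L v) = false) :
    (B.var (B.pivot L v), true) ∈ B.nodeClause L (B.next (B.pivot L v) false) ∧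
    (B.var (B.pivot L v), false) ∈ B.nodeClause L (B.next (B.pivot L v) true) ∧
    B.nodeClause L v =
      (B.nodeClause L (B.next (B.pivot L v) false)).erase (B.var (B.pivot L v), true) ∪
        (B.nodeClause L (B.next (B.pivot L v) true)).erase (B.var (B.pivot L v), false) := by
  induction v using B.induction_on_children with
  | leaf v hv => simp_all [pivot, label_of_isLeaf hv]
  | internal v hv ih =>
    rcases label_copy_or_resolve (L := L) hv with ⟨b, hb⟩ | ⟨h₀, h₁, hres⟩
    · simp only [pivot, nodeClause, hb] at h ⊢
      exact ih b h
    · simp only [pivot, nodeClause, hres, and_true]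
      exact ⟨h₀, h₁⟩

theorem step_of_isLeaf {σ : ℕ → Bool} {u : Fin s} (hu : B.isLeaf u = true) :
    B.step σ u = u := by
  simp [step, hu]

theorem step_of_isLeaf_eq_false {σ : ℕ → Bool} {u : Fin s} (hu : B.isLeaf u = false) :
    B.step σ u = B.next u (σ (B.var u)) := by
  simp [step, hu]

theorem iterate_step_of_isLeaf {σ : ℕ → Bool} {u : Fin s} (hu : B.isLeaf u = true) (n : ℕ) :
    (B.step σ)^[n] u = u :=
  Function.iterate_fixed (step_of_isLeaf hu) n

theorem run_eq_of_iterate_step {σ : ℕ → Bool} {k : ℕ} {v : Fin s}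
    (hrun : B.isLeaf (B.run σ) = true) (hk : (B.step σ)^[k] B.source = v)
    (hv : B.isLeaf v = true) : B.run σ = v := by
  rcases le_total k s with h | h
  · calc B.run σ = (B.step σ)^[s - k + k] B.source := by rw [Nat.sub_add_cancel h, run]
      _ = v := by rw [Function.iterate_add_apply, hk, iterate_step_of_isLeaf hv]
  · rw [← hk, ← Nat.sub_add_cancel h, Function.iterate_add_apply]
    exact (iterate_step_of_isLeaf hrun _).symm

theorem isLeaf_iterate_step_eq_false_of_le {σ : ℕ → Bool} {j k : ℕ}
    (hk : B.isLeaf ((B.step σ)^[k] B.source) = false) (hjk : j ≤ k) :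
    B.isLeaf ((B.step σ)^[j] B.source) = false := by
  by_contra hj
  rw [Bool.not_eq_false] at hj
  rw [← Nat.sub_add_cancel hjk, Function.iterate_add_apply, iterate_step_of_isLeaf hj] at hk
  simp_all

theorem isSourcePath_iterate_step {σ : ℕ → Bool} {k : ℕ}
    (hk : B.isLeaf ((B.step σ)^[k] B.source) = false) :
    B.IsSourcePath ((List.range (k + 1)).map fun j => (B.step σ)^[j] B.source) := by
  refine ⟨by simp [List.range_succ_eq_map], ?_⟩
  refine (List.isChain_map _).2 ((List.isChain_range_succ _ _).2 fun j hj => ?_)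
  have hj := isLeaf_iterate_step_eq_false_of_le hk hj.le
  exact ⟨hj, _, by rw [Function.iterate_succ_apply', step_of_isLeaf_eq_false hj]⟩

theorem var_iterate_step_ne (hro : B.ReadOnce) {σ : ℕ → Bool} {j k : ℕ}
    (hk : B.isLeaf ((B.step σ)^[k] B.source) = false) (hjk : j < k) :
    B.var ((B.step σ)^[j] B.source) ≠ B.var ((B.step σ)^[k] B.source) := by
  have hnd := hro _ (isSourcePath_iterate_step hk)
  have hinternal (i : ℕ) (hi : i < k + 1) : B.isLeaf ((B.step σ)^[i] B.source) = false :=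
    isLeaf_iterate_step_eq_false_of_le hk (Nat.le_of_lt_succ hi)
  rw [List.filter_eq_self.2 fun u hu => ?_, List.map_map] at hnd
  swap
  · obtain ⟨i, hi, rfl⟩ := List.mem_map.1 hu
    simp [hinternal i (List.mem_range.1 hi)]
  intro h
  have := List.inj_on_of_nodup_map hnd (List.mem_range.2 (by omega : j < k + 1))
    (List.mem_range.2 k.lt_succ_self) h
  omega

theorem iterate_step_congr {σ τ : ℕ → Bool} {k : ℕ}
    (h : ∀ j < k, σ (B.var ((B.step σ)^[j] B.source)) = τ (B.var ((B.step σ)^[j] B.source))) :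
    (B.step τ)^[k] B.source = (B.step σ)^[k] B.source := by
  induction k with
  | zero => rfl
  | succ k ih =>
    rw [Function.iterate_succ_apply', Function.iterate_succ_apply', ih fun j hj => h j (by omega)]
    simp only [step, h k k.lt_succ_self]

theorem iterate_step_update_var (hro : B.ReadOnce) {σ : ℕ → Bool} {k : ℕ} {v : Fin s}
    (hk : (B.step σ)^[k] B.source = v) (hv : B.isLeaf v = false) (b : Bool) :
    (B.step (Function.update σ (B.var v) b))^[k] B.source = v := by
  subst hk
  refine (iterate_step_congr fun j hj => ?_).trans rfl
  rw [Function.update_of_ne (var_iterate_step_ne hro hv hj)]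

theorem falsifies_nodeClause_of_iterate_step (hro : B.ReadOnce)
    (hrun : ∀ σ, B.isLeaf (B.run σ) = true) (hL : ∀ σ, Falsifies σ (L (B.run σ)))
    (v : Fin s) {σ : ℕ → Bool} {k : ℕ} (hk : (B.step σ)^[k] B.source = v) :
    Falsifies σ (B.nodeClause L v) := by
  induction v using B.induction_on_children generalizing σ k with
  | leaf v hv =>
    rw [nodeClause, label_of_isLeaf hv, ← run_eq_of_iterate_step (hrun σ) hk hv]
    exact hL σ
  | internal v hv ih =>
    have hchild (b : Bool) :
        Falsifies (Function.update σ (B.var v) b) (B.nodeClause L (B.next v b)) :=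
      ih b (k := k + 1) (by rw [Function.iterate_succ_apply', iterate_step_update_var hro hk hv,
        step_of_isLeaf_eq_false hv, Function.update_self])
    exact (falsifies_union.2 ⟨(hchild false).erase_of_update,
      (hchild true).erase_of_update⟩).mono (nodeClause_subset_resolvent hv)

theorem nodeClause_source_eq_empty (hro : B.ReadOnce)
    (hrun : ∀ σ, B.isLeaf (B.run σ) = true) (hL : ∀ σ, Falsifies σ (L (B.run σ))) :
    B.nodeClause L B.source = ∅ :=
  eq_empty_of_forall_falsifies fun _ =>
    falsifies_nodeClause_of_iterate_step hro hrun hL B.source (k := 0) rfl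

theorem lt_next_pivot {v : Fin s} (h : B.isLeaf (B.pivot L v) = false) (b : Bool) :
    v < B.next (B.pivot L v) b :=
  (le_of_reflTransGen_edge (reflTransGen_pivot v)).trans_lt (B.acyclic _ b h)

theorem Reachable.next_pivot {v : Fin s} (hv : B.Reachable v) (h : B.isLeaf (B.pivot L v) = false)
    (b : Bool) : B.Reachable (B.next (B.pivot L v) b) :=
  (hv.trans (reflTransGen_pivot v)).tail ⟨h, b, rfl⟩

variable (B L) in
open Classical in
noncomputable def isAxiomNode (v : Fin s) : Bool :=
  !decide (B.Reachable v ∧ B.isLeaf (B.pivot L v) = false)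

theorem isAxiomNode_eq_false {v : Fin s} :
    B.isAxiomNode L v = false ↔ B.Reachable v ∧ B.isLeaf (B.pivot L v) = false := by
  simp [isAxiomNode]

variable (B L)

open Classical in
/-- Line `i` of the refutation is node `i.rev`, so that premises come first. Nodes not reachable
from the source, about which read-onceness says nothing, become dummy axioms. -/
noncomputable def toResRefutation {φ : CNF} (hL : ∀ v, L v ∈ φ)
    (hsrc : B.nodeClause L B.source = ∅) : ResRefutation φ where
  size := s
  clause i := if B.Reachable i.rev then B.nodeClause L i.rev else L i.rev
  isAx i := B.isAxiomNode L i.rev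
  prem1 i := (B.next (B.pivot L i.rev) false).rev
  prem2 i := (B.next (B.pivot L i.rev) true).rev
  resVar i := B.var (B.pivot L i.rev)
  ax_mem i h := by
    split_ifs with hi
    · rw [nodeClause_eq_of_isLeaf_pivot (by simpa [isAxiomNode, hi] using h)]
      exact hL _
    · exact hL _
  prem1_lt i h := by
    rw [← Fin.rev_lt_rev, Fin.rev_rev]
    exact lt_next_pivot (isAxiomNode_eq_false.1 h).2 false
  prem2_lt i h := by
    rw [← Fin.rev_lt_rev, Fin.rev_rev]
    exact lt_next_pivot (isAxiomNode_eq_false.1 h).2 true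
  res_pos i h := by
    obtain ⟨hi, hpiv⟩ := isAxiomNode_eq_false.1 h
    simp only [Fin.rev_rev, if_pos (hi.next_pivot hpiv false)]
    exact (resolvent_at_pivot hpiv).1
  res_neg i h := by
    obtain ⟨hi, hpiv⟩ := isAxiomNode_eq_false.1 h
    simp only [Fin.rev_rev, if_pos (hi.next_pivot hpiv true)]
    exact (resolvent_at_pivot hpiv).2.1
  res_eq i h := by
    obtain ⟨hi, hpiv⟩ := isAxiomNode_eq_false.1 h
    simp only [Fin.rev_rev, if_pos hi, if_pos (hi.next_pivot hpiv false),
      if_pos (hi.next_pivot hpiv true)]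
    exact (resolvent_at_pivot hpiv).2.2
  refutes := ⟨B.source.rev, by
    simp only [Fin.rev_rev, if_pos (show B.Reachable B.source from .refl), hsrc]⟩

variable {B L}

theorem exists_isSourcePath_sublist_map_pivot {u : Fin s} {w : List (Fin s)} (hu : B.Reachable u)
    (hw : (u :: w).IsChain fun a b => B.Edge (B.pivot L a) b) :
    ∃ Q, B.IsSourcePath Q ∧ ((u :: w).map (B.pivot L)).Sublist Q := by
  have hchain : ((u :: w).map (B.pivot L)).IsChain (Relation.TransGen B.Edge) :=
    (List.isChain_map _).2 (hw.imp fun _ b h => .head' h (reflTransGen_pivot b))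
  obtain ⟨Q, hQ, hsub⟩ :=
    List.exists_isChain_cons_sublist_of_isChain_transGen (hu.trans (reflTransGen_pivot u)) hchain
  exact ⟨B.source :: Q, ⟨rfl, hQ⟩, hsub⟩

theorem toResRefutation_regular {φ : CNF} (hro : B.ReadOnce) (hL : ∀ v, L v ∈ φ)
    (hsrc : B.nodeClause L B.source = ∅) : (B.toResRefutation L hL hsrc).Regular := by
  -- the same statement, with line indices typed as `Fin s` rather than `Fin R.size`
  show ∀ l : List (Fin s), l.IsChain (fun u v => B.isAxiomNode L u.rev = false ∧
      (v = (B.next (B.pivot L u.rev) false).rev ∨ v = (B.next (B.pivot L u.rev) true).rev)) →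
    ((l.filter fun v => !B.isAxiomNode L v.rev).map (B.var ∘ B.pivot L ∘ Fin.rev)).Nodup
  rintro (_ | ⟨i, w⟩) hl
  · exact List.nodup_nil
  by_cases hi : B.Reachable i.rev
  · have hw : (i.rev :: w.map Fin.rev).IsChain fun a b => B.Edge (B.pivot L a) b := by
      refine (List.isChain_map Fin.rev (l := i :: w)).2 (hl.imp fun a b h => ?_)
      obtain ⟨hax, hb | hb⟩ := h <;> subst hb
      · exact ⟨(isAxiomNode_eq_false.1 hax).2, false, Fin.rev_rev _⟩
      · exact ⟨(isAxiomNode_eq_false.1 hax).2, true, Fin.rev_rev _⟩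
    obtain ⟨Q, hQ, hsub⟩ := exists_isSourcePath_sublist_map_pivot hi hw
    refine (hro Q hQ).sublist ?_
    have hfilter : ((i :: w).filter fun v => !B.isAxiomNode L v.rev).Sublist
        ((i :: w).filter ((fun v => !B.isLeaf v) ∘ B.pivot L ∘ Fin.rev)) :=
      List.monotone_filter_right _ fun a ha => by
        simpa using (isAxiomNode_eq_false.1 (by simpa using ha)).2
    have hpivots : (((i :: w).filter fun v => !B.isAxiomNode L v.rev).map
        (B.pivot L ∘ Fin.rev)).Sublist (Q.filter fun v => !B.isLeaf v) := by
      refine (hfilter.map _).trans ?_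
      rw [← List.filter_map]
      exact (show ((i :: w).map (B.pivot L ∘ Fin.rev)).Sublist Q by simpa using hsub).filter _
    simpa only [List.map_map] using hpivots.map B.var
  · cases w with
    | nil => exact (List.filter_sublist.map _).nodup (List.nodup_singleton _)
    | cons j w => exact absurd (isAxiomNode_eq_false.1 hl.rel.1).1 hi

end BranchingProgram

/-- From a read-once branching program of size `s` solving conflict clause search for an
unsatisfiable CNF `φ`, one gets a regular resolution refutation of `φ` of size at most `s`. -/
theorem readonce_bp_to_regular_resolution (φ : CNF) (hφ : Unsat φ)
    (s : ℕ) (B : BranchingProgram s) (hro : B.ReadOnce) (hsolve : B.SolvesSearch φ) :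
    ∃ R : ResRefutation φ, R.Regular ∧ R.size ≤ s := by
  obtain ⟨C₀, hC₀, -⟩ := hφ fun _ => true
  -- leaves whose clause is not in `φ` are never reached, so they may be relabelled
  let L v := if B.leafClause v ∈ φ then B.leafClause v else C₀
  have hL (v : Fin s) : L v ∈ φ := by
    dsimp only [L]
    split_ifs with h <;> assumption
  have hsrc : B.nodeClause L B.source = ∅ :=
    B.nodeClause_source_eq_empty hro (fun σ => (hsolve σ).1) fun σ => by
      simpa only [L, if_pos (hsolve σ).2.1] using (hsolve σ).2.2
  exact ⟨B.toResRefutation L hL hsrc, B.toResRefutation_regular hro hL hsrc, le_rfl⟩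
end
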